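/- arXiv:1808.08100 — 7 statements merged into one kernel-verified Lean document; each statement's English description precedes it below -/
import Mathlib

section
/- Let β > 0, ω, γ ≥ 0, and let f : [0,1] → ℝ be given by f(s) = Σ_{k≥0} (p_k − ε_k) s^k where p is a probability mass function on ℕ, 0 ≤ ε_k ≤ p_k for all k, the mean μ_D = Σ k p_k satisfies 0 < μ_D < ∞, and Σ_k k ε_k > 0. Then the equation (β+ω+γ)s − (ω+γ) = (β/μ_D) f'(s) has a unique solution s in [0,1). -/
/-!
Write `q k = p k - ε k ≥ 0` and `g s = ∑ k q_k s^(k-1)`, so that `f' = g` on `[0,1)`.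
The difference `D s = (β+ω+γ)s - (ω+γ) - (β/μ_D) g s` is continuous and concave on `[0,1]`
(the coefficients of `g` are nonnegative), with `D 0 ≤ 0` and `D 1 = β (∑ k ε_k) / μ_D > 0`.
The intermediate value theorem gives a zero in `[0,1)`, and concavity forbids a second one:
a zero strictly between a zero and `1` would force `D 1 ≤ 0`.
-/

open Set

/-- Termwise derivative of `∑ a_k s^k`; the `k = 0` term vanishes, so the truncated exponent
`0 - 1 = 0` is harmless. -/
noncomputable def tsumDeriv (a : ℕ → ℝ) (s : ℝ) : ℝ :=
  ∑' k : ℕ, (k : ℝ) * a k * s ^ (k - 1)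

lemma ConvexOn.tsum {E ι : Type*} [AddCommGroup E] [Module ℝ E] {s : Set E}
    {f : ι → E → ℝ} (hs : Convex ℝ s) (hf : ∀ i, ConvexOn ℝ s (f i))
    (hsum : ∀ x ∈ s, Summable fun i => f i x) :
    ConvexOn ℝ s fun x => ∑' i, f i x := by
  refine ⟨hs, fun x hx y hy a b ha hb hab => ?_⟩
  have hx' := (hsum x hx).mul_left a
  have hy' := (hsum y hy).mul_left b
  calc ∑' i, f i (a • x + b • y)
      ≤ ∑' i, (a * f i x + b * f i y) :=
        (hsum _ (hs hx hy ha hb hab)).tsum_le_tsum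
          (fun i => by simpa using (hf i).2 hx hy ha hb hab) (hx'.add hy')
    _ = a • ∑' i, f i x + b • ∑' i, f i y := by
        rw [hx'.tsum_add hy', tsum_mul_left, tsum_mul_left, smul_eq_mul, smul_eq_mul]

lemma ConcaveOn.existsUnique_eq_zero_Ico {D : ℝ → ℝ} {a b : ℝ} (hab : a ≤ b)
    (hconc : ConcaveOn ℝ (Icc a b) D) (hcont : ContinuousOn D (Icc a b))
    (ha : D a ≤ 0) (hb : 0 < D b) : ∃! s, s ∈ Ico a b ∧ D s = 0 := by
  have zero_ne_right : ∀ s, D s = 0 → s ≠ b := by rintro s hs rfl; linarith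
  have not_lt_of_zeros : ∀ x y, x ∈ Ico a b → y ∈ Ico a b → D x = 0 → D y = 0 → ¬ x < y := by
    intro x y hx hy hDx hDy hxy
    have hy_seg : y ∈ openSegment ℝ x b := by
      rw [openSegment_eq_Ioo (hxy.trans hy.2)]; exact ⟨hxy, hy.2⟩
    have := hconc.right_le_of_le_left (Ico_subset_Icc_self hx) (right_mem_Icc.2 hab) hy_seg
      (by rw [hDx, hDy])
    linarith
  obtain ⟨s, hs, hDs⟩ := intermediate_value_Icc hab hcont ⟨ha, hb.le⟩
  have hs' : s ∈ Ico a b := ⟨hs.1, lt_of_le_of_ne hs.2 (zero_ne_right s hDs)⟩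
  refine ⟨s, ⟨hs', hDs⟩, fun t ⟨ht, hDt⟩ => ?_⟩
  exact le_antisymm (not_lt.1 (not_lt_of_zeros s t hs' ht hDs hDt))
    (not_lt.1 (not_lt_of_zeros t s ht hs' hDt hDs))

section PowerSeries

variable {a : ℕ → ℝ}

lemma norm_deriv_term_le (k : ℕ) {y : ℝ} (hy : |y| ≤ 1) :
    ‖(k : ℝ) * a k * y ^ (k - 1)‖ ≤ k * |a k| := by
  rw [Real.norm_eq_abs, abs_mul, abs_mul, Nat.abs_cast, abs_pow]
  exact mul_le_of_le_one_right (by positivity) (pow_le_one₀ (abs_nonneg y) hy)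

variable (ha : Summable fun k : ℕ => (k : ℝ) * |a k|)
include ha

lemma hasDerivAt_tsum_pow {s : ℝ} (hs : s ∈ Ioo (-1 : ℝ) 1) :
    HasDerivAt (fun z => ∑' k, a k * z ^ k) (tsumDeriv a s) s := by
  refine hasDerivAt_tsum_of_isPreconnected ha isOpen_Ioo isPreconnected_Ioo
    (fun k y _ => ?_) (fun k y hy => norm_deriv_term_le k (abs_le.2 ⟨hy.1.le, hy.2.le⟩))
    (y₀ := 0) (by norm_num) (summable_of_ne_finset_zero (s := {0}) fun k hk => ?_) hs
  · simpa [mul_comm, mul_assoc] using (hasDerivAt_pow k y).const_mul (a k)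
  · simp_all

lemma summable_deriv_term {y : ℝ} (hy : |y| ≤ 1) :
    Summable fun k : ℕ => (k : ℝ) * a k * y ^ (k - 1) :=
  .of_norm_bounded ha fun k => norm_deriv_term_le k hy

lemma continuousOn_tsumDeriv : ContinuousOn (tsumDeriv a) (Icc (-1) 1) :=
  continuousOn_tsum (fun k => by fun_prop) ha fun k _ hy => norm_deriv_term_le k (abs_le.2 hy)

lemma convexOn_tsumDeriv (ha₀ : ∀ k, 0 ≤ a k) : ConvexOn ℝ (Icc 0 1) (tsumDeriv a) :=
  ConvexOn.tsum (convex_Icc 0 1)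
    (fun k => ((convexOn_pow (k - 1)).subset Icc_subset_Ici_self (convex_Icc 0 1)).smul
      (mul_nonneg k.cast_nonneg (ha₀ k)))
    fun _ hy => summable_deriv_term ha (abs_le.2 ⟨by linarith [hy.1], hy.2⟩)

end PowerSeries

theorem stmt_1_general (β ω γ : ℝ) (hβ : 0 < β) (hω : 0 ≤ ω) (hγ : 0 ≤ γ)
    (p ε : ℕ → ℝ)
    (hε : ∀ k, 0 ≤ ε k ∧ ε k ≤ p k)
    (μD : ℝ) (hμ : μD = ∑' k : ℕ, (k : ℝ) * p k) (hμpos : 0 < μD)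
    (hsum : Summable fun k : ℕ => (k : ℝ) * p k)
    (hεE : 0 < ∑' k : ℕ, (k : ℝ) * ε k)
    (f : ℝ → ℝ) (hf : ∀ s, f s = ∑' k : ℕ, (p k - ε k) * s ^ k) :
    ∃! s : ℝ, s ∈ Set.Ico (0 : ℝ) 1 ∧
      (β + ω + γ) * s - (ω + γ) = β / μD * deriv f s := by
  set q : ℕ → ℝ := fun k => p k - ε k
  have hq₀ : ∀ k, 0 ≤ q k := fun k => sub_nonneg.2 (hε k).2
  have hsumε : Summable fun k : ℕ => (k : ℝ) * ε k :=
    hsum.of_nonneg_of_le (fun k => mul_nonneg k.cast_nonneg (hε k).1)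
      fun k => mul_le_mul_of_nonneg_left (hε k).2 k.cast_nonneg
  have hsumq : Summable fun k : ℕ => (k : ℝ) * |q k| :=
    (hsum.sub hsumε).congr fun k => by simp only [q, abs_of_nonneg (hq₀ k)]; ring
  have hderiv : ∀ s ∈ Ico (0 : ℝ) 1, deriv f s = tsumDeriv q s := fun s hs =>
    (funext hf ▸ hasDerivAt_tsum_pow hsumq ⟨by linarith [hs.1], hs.2⟩).deriv
  have hg₀ : 0 ≤ tsumDeriv q 0 :=
    tsum_nonneg fun k => mul_nonneg (mul_nonneg k.cast_nonneg (hq₀ k)) (pow_nonneg le_rfl _)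
  have hg₁ : tsumDeriv q 1 = μD - ∑' k : ℕ, (k : ℝ) * ε k := by
    simp only [tsumDeriv, one_pow, mul_one, q, mul_sub, hsum.tsum_sub hsumε, hμ]
  set D : ℝ → ℝ := fun s => (β + ω + γ) * s - (ω + γ) - β / μD * tsumDeriv q s
  have hconc : ConcaveOn ℝ (Icc 0 1) D :=
    ((((concaveOn_id (convex_Icc 0 1)).smul (by linarith : 0 ≤ β + ω + γ)).add_const
      (-(ω + γ))).sub ((convexOn_tsumDeriv hsumq hq₀).smul (div_pos hβ hμpos).le)).congr
      fun s _ => by simp only [D, smul_eq_mul, id, Pi.sub_apply, Pi.add_apply]; ring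
  have hcont : ContinuousOn D (Icc 0 1) := by
    have := (continuousOn_tsumDeriv hsumq).mono
      (Icc_subset_Icc_left (by norm_num : (-1 : ℝ) ≤ 0))
    fun_prop
  have hD₀ : D 0 ≤ 0 := by
    simp only [D]; linarith [mul_nonneg (div_pos hβ hμpos).le hg₀]
  have hD₁ : 0 < D 1 := by
    have : D 1 = β * (∑' k : ℕ, (k : ℝ) * ε k) / μD := by
      simp only [D, hg₁]; field_simp; ring
    rw [this]; positivity
  refine (existsUnique_congr fun s => and_congr_right fun hs => ?_).1
    (hconc.existsUnique_eq_zero_Ico zero_le_one hcont hD₀ hD₁)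
  rw [hderiv s hs]
  constructor <;> intro h <;> linarith

/-- The final-size equation
`(β+ω+γ)s − (ω+γ) = (β/μ_D) f'(s)`, with `f(s) = Σ (p_k − ε_k) s^k`,
has a unique solution in `[0,1)` when the epidemic is started with a positive
fraction of initially infected stubs (`Σ k ε_k > 0`). -/
theorem stmt_1 (β ω γ : ℝ) (hβ : 0 < β) (hω : 0 ≤ ω) (hγ : 0 ≤ γ)
    (p ε : ℕ → ℝ) (hp : ∀ k, 0 ≤ p k) (hp1 : ∑' k : ℕ, p k = 1)
    (hε : ∀ k, 0 ≤ ε k ∧ ε k ≤ p k)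
    (μD : ℝ) (hμ : μD = ∑' k : ℕ, (k : ℝ) * p k) (hμpos : 0 < μD)
    (hsum : Summable fun k : ℕ => (k : ℝ) * p k)
    (hεE : 0 < ∑' k : ℕ, (k : ℝ) * ε k)
    (f : ℝ → ℝ) (hf : ∀ s, f s = ∑' k : ℕ, (p k - ε k) * s ^ k) :
    ∃! s : ℝ, s ∈ Set.Ico (0 : ℝ) 1 ∧
      (β + ω + γ) * s - (ω + γ) = β / μD * deriv f s :=
  stmt_1_general β ω γ hβ hω hγ p ε hε μD hμ hμpos hsum hεE f hf
end

section
/- With the setup of the previous statement, for every integer k ≥ 2, Var(Y_k^{(γ,ω)}) < Var(Y_k^{(γ+ω,0)}) whenever ω > 0. -/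
/-!
A mixed binomial `MBin(k, Q)` has first and second moments `k E[Q]` and
`k E[Q] + k(k-1) E[Q²]` (the factorial moments of the binomial law). For
`Q = c (1 - e^{-sX})` with `X ~ Exp(r)`, the Laplace transform `E[e^{-tX}] = r / (r + t)` gives
`E[Q] = cs / (r + s)` and `E[Q²] = 2c²s² / ((r + s)(r + 2s))`. Both offspring laws have mean
`kβ / (γ + β + ω)`, so the variances differ only through `k(k-1) E[Q²]`, where the denominators are
`(γ + β + ω)(γ + 2β + 2ω)` against `(γ + β + ω)(γ + 2β + ω)`: the extra `ω` makes the first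
variance strictly smaller.
-/

open Real MeasureTheory ProbabilityTheory Finset

theorem sum_mul_bernstein (k : ℕ) (p : ℝ) :
    ∑ y ∈ range (k + 1), (y : ℝ) * (k.choose y * p ^ y * (1 - p) ^ (k - y)) = k * p := by
  simpa [bernsteinPolynomial, Polynomial.eval_finsetSum, mul_assoc] using
    congrArg (Polynomial.eval p) (bernsteinPolynomial.sum_smul ℝ k)

theorem sum_sq_mul_bernstein (k : ℕ) (p : ℝ) :
    ∑ y ∈ range (k + 1), (y : ℝ) ^ 2 * (k.choose y * p ^ y * (1 - p) ^ (k - y))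
      = k * p + k * (k - 1) * p ^ 2 := by
  have hfalling := congrArg (Polynomial.eval p) (bernsteinPolynomial.sum_mul_smul ℝ k)
  simp only [Polynomial.eval_finsetSum, bernsteinPolynomial, Polynomial.eval_mul,
    Polynomial.eval_pow, Polynomial.eval_X, Polynomial.eval_sub, Polynomial.eval_one,
    Polynomial.eval_natCast, nsmul_eq_mul] at hfalling
  have hcast (n : ℕ) : ((n * (n - 1) : ℕ) : ℝ) = n * (n - 1) := by
    cases n <;> simp
  simp only [hcast] at hfalling
  rw [← sum_mul_bernstein k p, ← hfalling, ← sum_add_distrib]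
  exact sum_congr rfl fun y _ => by ring

section MixedBinomial

variable {Ω : Type*} [MeasurableSpace Ω] {μ : Measure Ω} [IsFiniteMeasure μ] {Q : Ω → ℝ}

theorem integrable_pow_mul_one_sub_pow (hQm : AEStronglyMeasurable Q μ)
    (hQ : ∀ᵐ a ∂μ, Q a ∈ Set.Icc 0 1) (m n : ℕ) :
    Integrable (fun a => Q a ^ m * (1 - Q a) ^ n) μ := by
  refine Integrable.of_bound (by fun_prop) 1 ?_
  filter_upwards [hQ] with a ⟨h0, h1⟩
  rw [norm_mul, norm_pow, norm_pow, Real.norm_of_nonneg h0, Real.norm_of_nonneg (by linarith)]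
  exact mul_le_one₀ (pow_le_one₀ h0 h1) (by positivity) (pow_le_one₀ (by linarith) (by linarith))

theorem sum_mul_integral_bernstein (hQm : AEStronglyMeasurable Q μ)
    (hQ : ∀ᵐ a ∂μ, Q a ∈ Set.Icc 0 1) (k : ℕ) (g : ℕ → ℝ) :
    ∑ y ∈ range (k + 1), g y * ∫ a, (k.choose y : ℝ) * Q a ^ y * (1 - Q a) ^ (k - y) ∂μ
      = ∫ a, ∑ y ∈ range (k + 1), g y * (k.choose y * Q a ^ y * (1 - Q a) ^ (k - y)) ∂μ := by
  simp_rw [← integral_const_mul, mul_assoc (k.choose _ : ℝ)]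
  exact (integral_finsetSum _ fun y _ =>
    ((integrable_pow_mul_one_sub_pow hQm hQ y (k - y)).const_mul _).const_mul _).symm

theorem variance_mixedBinomial (hQm : AEStronglyMeasurable Q μ)
    (hQ : ∀ᵐ a ∂μ, Q a ∈ Set.Icc 0 1) (k : ℕ) :
    (∑ y ∈ range (k + 1),
        (y : ℝ) ^ 2 * ∫ a, (k.choose y : ℝ) * Q a ^ y * (1 - Q a) ^ (k - y) ∂μ)
      - (∑ y ∈ range (k + 1),
        (y : ℝ) * ∫ a, (k.choose y : ℝ) * Q a ^ y * (1 - Q a) ^ (k - y) ∂μ) ^ 2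
      = k * ∫ a, Q a ∂μ + k * (k - 1) * ∫ a, Q a ^ 2 ∂μ - (k * ∫ a, Q a ∂μ) ^ 2 := by
  have hQ1 : Integrable Q μ := by simpa using integrable_pow_mul_one_sub_pow hQm hQ 1 0
  have hQ2 : Integrable (fun a => Q a ^ 2) μ := by
    simpa using integrable_pow_mul_one_sub_pow hQm hQ 2 0
  simp only [sum_mul_integral_bernstein hQm hQ, sum_mul_bernstein, sum_sq_mul_bernstein]
  rw [integral_add (hQ1.const_mul _) (hQ2.const_mul _)]
  simp only [integral_const_mul]

end MixedBinomial

theorem ae_nonneg_expMeasure (r : ℝ) : ∀ᵐ x ∂expMeasure r, 0 ≤ x := by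
  refine (ae_withDensity_iff (measurable_exponentialPDFReal r).ennreal_ofReal).mpr
    (ae_of_all _ fun x hx => ?_)
  by_contra! hneg
  exact hx (exponentialPDF_of_neg hneg)

-- The integrand times the `Exp(r)` density is `r / (r + s)` times the `Exp(r + s)` density.
theorem integral_exp_neg_mul_expMeasure {r s : ℝ} (hr : 0 < r) (hs : 0 ≤ s) :
    ∫ x, exp (-s * x) ∂expMeasure r = r / (r + s) := by
  have hrs : 0 < r + s := by linarith
  have hdensity (x : ℝ) : exponentialPDF r x * ENNReal.ofReal (exp (-s * x))
      = ENNReal.ofReal (r / (r + s)) * exponentialPDF (r + s) x := by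
    rcases le_or_gt 0 x with hx | hx
    · rw [exponentialPDF_of_nonneg hx, exponentialPDF_of_nonneg hx,
        ← ENNReal.ofReal_mul (by positivity), ← ENNReal.ofReal_mul (by positivity)]
      congr 1
      rw [show -((r + s) * x) = -(r * x) + -s * x by ring, exp_add]
      field_simp
    · simp only [exponentialPDF_of_neg hx, zero_mul, mul_zero]
  have hμ : expMeasure r = volume.withDensity (exponentialPDF r) := rfl
  rw [hμ, integral_eq_lintegral_of_nonneg_ae (ae_of_all _ fun x => (exp_pos _).le) (by fun_prop),
    lintegral_withDensity_eq_lintegral_mul _ (f := exponentialPDF r)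
      (measurable_exponentialPDFReal r).ennreal_ofReal (by fun_prop)]
  simp only [Pi.mul_apply, hdensity]
  rw [lintegral_const_mul _ (f := exponentialPDF (r + s))
      (measurable_exponentialPDFReal _).ennreal_ofReal, lintegral_exponentialPDF_eq_one hrs,
    mul_one, ENNReal.toReal_ofReal (by positivity)]

section ExponentialMixing

variable {Ω : Type*} [MeasurableSpace Ω] {μ : Measure Ω} {X : Ω → ℝ} {r : ℝ}

theorem aemeasurable_of_map_eq_expMeasure (hr : 0 < r) (hd : μ.map X = expMeasure r) :
    AEMeasurable X μ :=
  AEMeasurable.of_map_ne_zero (hd ▸ (isProbabilityMeasure_expMeasure hr).ne_zero)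

theorem isProbabilityMeasure_of_map_eq_expMeasure (hr : 0 < r) (hd : μ.map X = expMeasure r) :
    IsProbabilityMeasure μ := by
  have := isProbabilityMeasure_expMeasure hr
  rw [← hd] at this
  exact Measure.isProbabilityMeasure_of_map X

theorem ae_nonneg_of_map_eq_expMeasure (hr : 0 < r) (hd : μ.map X = expMeasure r) :
    ∀ᵐ a ∂μ, 0 ≤ X a :=
  ae_of_ae_map (aemeasurable_of_map_eq_expMeasure hr hd) (hd ▸ ae_nonneg_expMeasure r)

theorem integral_exp_neg_mul_of_map_eq_expMeasure (hr : 0 < r) (hd : μ.map X = expMeasure r)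
    {s : ℝ} (hs : 0 ≤ s) : ∫ a, exp (-s * X a) ∂μ = r / (r + s) := by
  rw [← integral_exp_neg_mul_expMeasure hr hs, ← hd,
    integral_map (aemeasurable_of_map_eq_expMeasure hr hd) (by fun_prop)]

theorem integrable_exp_neg_mul_of_map_eq_expMeasure (hr : 0 < r) (hd : μ.map X = expMeasure r)
    {s : ℝ} (hs : 0 ≤ s) : Integrable (fun a => exp (-s * X a)) μ :=
  Integrable.of_integral_ne_zero <| by
    rw [integral_exp_neg_mul_of_map_eq_expMeasure hr hd hs]; positivity

variable {s : ℝ}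

theorem integral_mul_one_sub_exp_of_map_eq_expMeasure (hr : 0 < r)
    (hd : μ.map X = expMeasure r) (hs : 0 ≤ s) (c : ℝ) :
    ∫ a, c * (1 - exp (-s * X a)) ∂μ = c * s / (r + s) := by
  have := isProbabilityMeasure_of_map_eq_expMeasure hr hd
  rw [integral_const_mul, integral_sub (integrable_const 1)
      (integrable_exp_neg_mul_of_map_eq_expMeasure hr hd hs), integral_const, probReal_univ,
    smul_eq_mul, mul_one, integral_exp_neg_mul_of_map_eq_expMeasure hr hd hs]
  field_simp
  ring

theorem integral_mul_one_sub_exp_sq_of_map_eq_expMeasure (hr : 0 < r)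
    (hd : μ.map X = expMeasure r) (hs : 0 ≤ s) (c : ℝ) :
    ∫ a, (c * (1 - exp (-s * X a))) ^ 2 ∂μ = c ^ 2 * (2 * s ^ 2 / ((r + s) * (r + 2 * s))) := by
  have := isProbabilityMeasure_of_map_eq_expMeasure hr hd
  have hs2 : 0 ≤ 2 * s := by positivity
  have hE1 := integrable_exp_neg_mul_of_map_eq_expMeasure hr hd hs
  have hE2 := integrable_exp_neg_mul_of_map_eq_expMeasure hr hd hs2
  have hsq (a : Ω) : (c * (1 - exp (-s * X a))) ^ 2
      = c ^ 2 * (1 - 2 * exp (-s * X a) + exp (-(2 * s) * X a)) := by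
    rw [show -(2 * s) * X a = -s * X a + -s * X a by ring, exp_add]
    ring
  simp only [hsq]
  rw [integral_const_mul, integral_add (f := fun a => 1 - 2 * exp (-s * X a))
      ((integrable_const 1).sub (hE1.const_mul 2)) hE2,
    integral_sub (integrable_const 1) (hE1.const_mul 2), integral_const, probReal_univ,
    smul_eq_mul, mul_one, integral_const_mul, integral_exp_neg_mul_of_map_eq_expMeasure hr hd hs,
    integral_exp_neg_mul_of_map_eq_expMeasure hr hd hs2]
  field_simp
  ring

theorem variance_mixedBinomial_of_map_eq_expMeasure (hr : 0 < r) (hd : μ.map X = expMeasure r)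
    {c : ℝ} (hc : c ∈ Set.Icc 0 1) (hs : 0 ≤ s) {Q : Ω → ℝ}
    (hQ : ∀ a, Q a = c * (1 - exp (-s * X a))) (k : ℕ) :
    (∑ y ∈ range (k + 1),
        (y : ℝ) ^ 2 * ∫ a, (k.choose y : ℝ) * Q a ^ y * (1 - Q a) ^ (k - y) ∂μ)
      - (∑ y ∈ range (k + 1),
        (y : ℝ) * ∫ a, (k.choose y : ℝ) * Q a ^ y * (1 - Q a) ^ (k - y) ∂μ) ^ 2
      = k * (c * s / (r + s)) + k * (k - 1) * (c ^ 2 * (2 * s ^ 2 / ((r + s) * (r + 2 * s))))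
        - (k * (c * s / (r + s))) ^ 2 := by
  have := isProbabilityMeasure_of_map_eq_expMeasure hr hd
  obtain rfl : Q = fun a => c * (1 - exp (-s * X a)) := funext hQ
  have hQm : AEStronglyMeasurable (fun a => c * (1 - exp (-s * X a))) μ := by
    have := aemeasurable_of_map_eq_expMeasure hr hd
    fun_prop
  have hQ01 : ∀ᵐ a ∂μ, c * (1 - exp (-s * X a)) ∈ Set.Icc 0 1 := by
    filter_upwards [ae_nonneg_of_map_eq_expMeasure hr hd] with a ha
    have : exp (-s * X a) ≤ 1 := exp_le_one_iff.mpr (by nlinarith)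
    constructor <;> nlinarith [exp_pos (-s * X a), hc.1, hc.2]
  rw [variance_mixedBinomial hQm hQ01, integral_mul_one_sub_exp_of_map_eq_expMeasure hr hd hs,
    integral_mul_one_sub_exp_sq_of_map_eq_expMeasure hr hd hs]

end ExponentialMixing

theorem stmt_9_general {Ω : Type*} [MeasureSpace Ω]
    (β γ ω : ℝ) (hβ : 0 < β) (hγ : 0 < γ) (hω : 0 < ω)
    (k : ℕ) (hk : 2 ≤ k)
    (I Istar : Ω → ℝ)
    (hIdist : Measure.map I ℙ = expMeasure γ)
    (hIstardist : Measure.map Istar ℙ = expMeasure (γ + ω))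
    (P Pstar : Ω → ℝ)
    (hP : ∀ a, P a = β / (β + ω) * (1 - exp (-(β + ω) * I a)))
    (hPstar : ∀ a, Pstar a = 1 - exp (-β * Istar a))
    (pY pYstar : ℕ → ℝ)
    (hpY : ∀ y, pY y =
      ∫ a, (k.choose y : ℝ) * P a ^ y * (1 - P a) ^ (k - y) ∂ℙ)
    (hpYstar : ∀ y, pYstar y =
      ∫ a, (k.choose y : ℝ) * Pstar a ^ y * (1 - Pstar a) ^ (k - y) ∂ℙ) :
    (∑ y ∈ Finset.range (k + 1), (y : ℝ) ^ 2 * pY y)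
        - (∑ y ∈ Finset.range (k + 1), (y : ℝ) * pY y) ^ 2
      < (∑ y ∈ Finset.range (k + 1), (y : ℝ) ^ 2 * pYstar y)
        - (∑ y ∈ Finset.range (k + 1), (y : ℝ) * pYstar y) ^ 2 := by
  have hβω : 0 < β + ω := by linarith
  have hc : β / (β + ω) ∈ Set.Icc 0 1 := ⟨by positivity, div_le_one_of_le₀ (by linarith) hβω.le⟩
  obtain rfl : pY = _ := funext hpY
  obtain rfl : pYstar = _ := funext hpYstar
  rw [variance_mixedBinomial_of_map_eq_expMeasure hγ hIdist hc hβω.le hP,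
    variance_mixedBinomial_of_map_eq_expMeasure (by positivity) hIstardist ⟨zero_le_one, le_rfl⟩
      hβ.le (fun a => (hPstar a).trans (one_mul _).symm)]
  have hmean : β / (β + ω) * (β + ω) / (γ + (β + ω)) = 1 * β / (γ + ω + β) := by
    field_simp
    ring
  have hsecond : (β / (β + ω)) ^ 2 * (2 * (β + ω) ^ 2 / ((γ + (β + ω)) * (γ + 2 * (β + ω))))
      < 1 ^ 2 * (2 * β ^ 2 / ((γ + ω + β) * (γ + ω + 2 * β))) := by
    have hlhs : (β / (β + ω)) ^ 2 * (2 * (β + ω) ^ 2 / ((γ + (β + ω)) * (γ + 2 * (β + ω))))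
        = 2 * β ^ 2 / ((γ + ω + β) * (γ + ω + 2 * β + ω)) := by
      field_simp
      ring
    rw [hlhs, one_pow, one_mul]
    exact div_lt_div_of_pos_left (by positivity) (by positivity)
      (mul_lt_mul_of_pos_left (by linarith) (by positivity))
  have hkk : 0 < (k : ℝ) * (k - 1) := by
    have : (2 : ℝ) ≤ k := by exact_mod_cast hk
    nlinarith
  rw [hmean]
  linarith [mul_lt_mul_of_pos_left hsecond hkk]

/-- For `k ≥ 2` and `ω > 0`, the variance of
`Y_k^{(γ,ω)} ~ MBin(k, (β/(β+ω))(1−e^{-(β+ω)I}))`, `I ~ Exp(γ)`, is strictly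
smaller than that of `Y_k^{(γ+ω,0)} ~ MBin(k, 1−e^{-βI*})`, `I* ~ Exp(γ+ω)`. -/
theorem stmt_9 {Ω : Type*} [MeasureSpace Ω] [IsProbabilityMeasure (ℙ : Measure Ω)]
    (β γ ω : ℝ) (hβ : 0 < β) (hγ : 0 < γ) (hω : 0 < ω)
    (k : ℕ) (hk : 2 ≤ k)
    (I Istar : Ω → ℝ) (hI : Measurable I) (hIstar : Measurable Istar)
    (hIdist : Measure.map I ℙ = expMeasure γ)
    (hIstardist : Measure.map Istar ℙ = expMeasure (γ + ω))
    (P Pstar : Ω → ℝ)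
    (hP : ∀ a, P a = β / (β + ω) * (1 - exp (-(β + ω) * I a)))
    (hPstar : ∀ a, Pstar a = 1 - exp (-β * Istar a))
    (pY pYstar : ℕ → ℝ)
    (hpY : ∀ y, pY y =
      ∫ a, (k.choose y : ℝ) * P a ^ y * (1 - P a) ^ (k - y) ∂ℙ)
    (hpYstar : ∀ y, pYstar y =
      ∫ a, (k.choose y : ℝ) * Pstar a ^ y * (1 - Pstar a) ^ (k - y) ∂ℙ) :
    (∑ y ∈ Finset.range (k + 1), (y : ℝ) ^ 2 * pY y)
        - (∑ y ∈ Finset.range (k + 1), (y : ℝ) * pY y) ^ 2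
      < (∑ y ∈ Finset.range (k + 1), (y : ℝ) ^ 2 * pYstar y)
        - (∑ y ∈ Finset.range (k + 1), (y : ℝ) * pYstar y) ^ 2 :=
  stmt_9_general β γ ω hβ hγ hω k hk I Istar hIdist hIstardist P Pstar hP hPstar pY pYstar hpY
    hpYstar
end

section
/- Let β > 0, ω ≥ 0 and set γ = 1. For integers r ≥ 0 define P_r^{drop} = Σ_{i=0}^{r} C(r,i) (ω/(β+ω))^{r−i} (β/(β+ω))^{i} · 1/(1 + i(β+ω)) and P_r^{mod} = (1+ω)/(1+ω+rβ). Then P_r^{drop} ≤ P_r^{mod} for all r ≥ 0, with equality for r = 0 and r = 1, and strict inequality for r ≥ 2 when ω > 0. -/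
open Finset

/-!
Put `p = β/(β+ω)`, `q = ω/(β+ω)`, `s = β+ω` and `f i = 1/(1+is)`. Then
`P_r^{drop} = E f(X_r)` with `X_r ~ Bin(r, p)` and `P_r^{mod} = (1+qs)/(1+qs+rps)`.
Write `S_m = E f(X_m)` and `T_m = E f(X_m + 1)`. Since `(1+is) f i = 1`, the moment identity
`E[X_{m+1} g(X_{m+1})] = (m+1) p E g(X_m + 1)` gives `S_{m+1} = 1 - (m+1)ps T_m`, and Pascal's
rule gives `S_{m+1} = q S_m + p T_m`. Together,
`(1+qs+(m+1)ps) S_{m+1} = 1+qs - (m+1)psq ((1+s) T_m - S_m)`,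
and `f i ≤ (1+s) f (i+1)`, with equality only at `i = 0`, makes the correction term nonnegative,
zero for `m = 0`, and positive for `m ≥ 1` when `q > 0`.
-/

-- `E f(X)` for `X ~ Bin(m, p)` when `q = 1 - p`; `q` is kept free so that the weights
-- `(ω/(β+ω))^(r-i) (β/(β+ω))^i` of the statement match literally.
noncomputable def binomialSum (p q : ℝ) (m : ℕ) (f : ℕ → ℝ) : ℝ :=
  ∑ i ∈ range (m + 1), (m.choose i : ℝ) * q ^ (m - i) * p ^ i * f i

section

variable (p q : ℝ)

theorem binomialSum_const (hpq : p + q = 1) (m : ℕ) (c : ℝ) :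
    binomialSum p q m (fun _ => c) = c := by
  have h : ∑ i ∈ range (m + 1), (m.choose i : ℝ) * q ^ (m - i) * p ^ i = (p + q) ^ m := by
    rw [add_pow]
    exact sum_congr rfl fun i _ => by ring
  rw [binomialSum, ← sum_mul, h, hpq, one_pow, one_mul]

theorem binomialSum_add (m : ℕ) (f g : ℕ → ℝ) :
    binomialSum p q m (fun i => f i + g i) = binomialSum p q m f + binomialSum p q m g := by
  simp only [binomialSum, mul_add, sum_add_distrib]

theorem binomialSum_const_mul (m : ℕ) (c : ℝ) (f : ℕ → ℝ) :
    binomialSum p q m (fun i => c * f i) = c * binomialSum p q m f := by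
  simp only [binomialSum, mul_sum]
  exact sum_congr rfl fun i _ => by ring

theorem binomialSum_succ (m : ℕ) (f : ℕ → ℝ) :
    binomialSum p q (m + 1) f = q * binomialSum p q m f + p * binomialSum p q m (f <| · + 1) := by
  simp only [binomialSum, mul_sum]
  convert sum_choose_succ_mul (fun i j => q ^ j * p ^ i * f i) m using 1
  · exact sum_congr rfl fun i _ => by ring
  congr 1 <;> refine sum_congr rfl fun i hi => ?_
  · rw [Nat.sub_add_comm (Nat.lt_succ_iff.mp (mem_range.mp hi)), pow_succ]; ring
  · ring

theorem binomialSum_natCast_mul (m : ℕ) (f : ℕ → ℝ) :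
    binomialSum p q (m + 1) (fun i => i * f i) = (m + 1) * p * binomialSum p q m (f <| · + 1) := by
  rw [binomialSum, sum_range_succ', binomialSum, mul_sum]
  simp only [Nat.cast_zero, zero_mul, mul_zero, add_zero, Nat.add_sub_add_right]
  refine sum_congr rfl fun i _ => ?_
  have h : ((m + 1 : ℕ) : ℝ) * m.choose i = (m + 1).choose (i + 1) * (i + 1 : ℕ) := by
    exact_mod_cast Nat.add_one_mul_choose_eq m i
  push_cast at h ⊢
  linear_combination -(q ^ (m - i) * p ^ (i + 1) * f (i + 1)) * h

theorem binomialSum_zero (f : ℕ → ℝ) : binomialSum p q 0 f = f 0 := by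
  simp [binomialSum]

variable {p q}

theorem binomialSum_le_binomialSum (hp : 0 ≤ p) (hq : 0 ≤ q) (m : ℕ) {f g : ℕ → ℝ}
    (h : ∀ i, f i ≤ g i) :
    binomialSum p q m f ≤ binomialSum p q m g :=
  sum_le_sum fun i _ => mul_le_mul_of_nonneg_left (h i) (by positivity)

theorem binomialSum_lt_binomialSum (hp : 0 < p) (hq : 0 ≤ q) (m : ℕ) {f g : ℕ → ℝ}
    (h : ∀ i, f i ≤ g i) (hm : f m < g m) : binomialSum p q m f < binomialSum p q m g := by
  refine sum_lt_sum (fun i _ => mul_le_mul_of_nonneg_left (h i) (by positivity))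
    ⟨m, self_mem_range_succ m, mul_lt_mul_of_pos_left hm ?_⟩
  simp only [Nat.choose_self, Nat.sub_self, pow_zero, Nat.cast_one, one_mul]
  positivity

end

section

variable {p q s : ℝ}

theorem one_div_le_mul_one_div_succ (hs : 0 ≤ s) (i : ℕ) :
    1 / (1 + i * s) ≤ (1 + s) * (1 / (1 + (i + 1 : ℕ) * s)) := by
  push_cast
  rw [mul_one_div, div_le_div_iff₀ (by positivity) (by positivity)]
  nlinarith [mul_nonneg (mul_nonneg i.cast_nonneg hs) hs]

theorem one_div_lt_mul_one_div_succ (hs : 0 < s) {i : ℕ} (hi : 1 ≤ i) :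
    1 / (1 + i * s) < (1 + s) * (1 / (1 + (i + 1 : ℕ) * s)) := by
  have hi' : (1 : ℝ) ≤ i := by exact_mod_cast hi
  push_cast
  rw [mul_one_div, div_lt_div_iff₀ (by positivity) (by positivity)]
  nlinarith [mul_pos hs hs]

theorem binomialSum_one_div_succ (hpq : p + q = 1) (hs : 0 ≤ s) (m : ℕ) :
    binomialSum p q (m + 1) (fun i => 1 / (1 + i * s)) =
      1 - (m + 1) * p * s * binomialSum p q m (fun i => 1 / (1 + (i + 1 : ℕ) * s)) := by
  have h : (fun i : ℕ => 1 / (1 + i * s) + s * (i * (1 / (1 + i * s)))) = fun _ => 1 := by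
    ext i
    have : 1 + i * s ≠ 0 := by positivity
    field_simp
  have := congrArg (binomialSum p q (m + 1)) h
  rw [binomialSum_add, binomialSum_const_mul, binomialSum_natCast_mul,
    binomialSum_const p q hpq] at this
  linear_combination this

theorem mul_binomialSum_one_div_succ (hpq : p + q = 1) (hs : 0 ≤ s) (m : ℕ) :
    (1 + q * s + (m + 1) * (p * s)) * binomialSum p q (m + 1) (fun i => 1 / (1 + i * s)) =
      1 + q * s - (m + 1) * p * s * q *
        ((1 + s) * binomialSum p q m (fun i => 1 / (1 + (i + 1 : ℕ) * s)) -
          binomialSum p q m (fun i => 1 / (1 + i * s))) := by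
  linear_combination (1 + q * s) * binomialSum_one_div_succ hpq hs m +
    (m + 1) * p * s * binomialSum_succ p q m (fun i => 1 / (1 + i * s)) +
    (m + 1) * p * s * binomialSum p q m (fun i => 1 / (1 + (i + 1 : ℕ) * s)) * hpq

theorem binomialSum_one_div_zero (hq : 0 ≤ q) (hs : 0 ≤ s) :
    binomialSum p q 0 (fun i => 1 / (1 + i * s)) =
      (1 + q * s) / (1 + q * s + (0 : ℕ) * (p * s)) := by
  simp [binomialSum_zero, div_self (by positivity : 1 + q * s ≠ 0)]

theorem binomialSum_one_div_le_shift (hp : 0 ≤ p) (hq : 0 ≤ q) (hs : 0 ≤ s) (m : ℕ) :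
    binomialSum p q m (fun i => 1 / (1 + i * s)) ≤
      (1 + s) * binomialSum p q m (fun i => 1 / (1 + (i + 1 : ℕ) * s)) := by
  rw [← binomialSum_const_mul]
  exact binomialSum_le_binomialSum hp hq m (one_div_le_mul_one_div_succ hs)

theorem binomialSum_one_div_lt_shift (hp : 0 < p) (hq : 0 ≤ q) (hs : 0 < s) {m : ℕ}
    (hm : 1 ≤ m) :
    binomialSum p q m (fun i => 1 / (1 + i * s)) <
      (1 + s) * binomialSum p q m (fun i => 1 / (1 + (i + 1 : ℕ) * s)) := by
  rw [← binomialSum_const_mul]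
  exact binomialSum_lt_binomialSum hp hq m (one_div_le_mul_one_div_succ hs.le)
    (one_div_lt_mul_one_div_succ hs hm)

theorem binomialSum_one_div_one (hpq : p + q = 1) (hs : 0 ≤ s) :
    binomialSum p q 1 (fun i => 1 / (1 + i * s)) =
      (1 + q * s) / (1 + q * s + (1 : ℕ) * (p * s)) := by
  have hs' : 1 + s ≠ 0 := by positivity
  have hden : 1 + q * s + p * s = 1 + s := by linear_combination s * hpq
  have h := mul_binomialSum_one_div_succ hpq hs 0
  rw [Nat.cast_one, one_mul, hden, eq_div_iff hs', mul_comm]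
  simpa [binomialSum_zero, hs', hden] using h

theorem binomialSum_one_div_le (hp : 0 ≤ p) (hq : 0 ≤ q) (hpq : p + q = 1) (hs : 0 ≤ s)
    (r : ℕ) :
    binomialSum p q r (fun i => 1 / (1 + i * s)) ≤ (1 + q * s) / (1 + q * s + r * (p * s)) := by
  rcases r with _ | m
  · exact (binomialSum_one_div_zero hq hs).le
  have := sub_nonneg.2 (binomialSum_one_div_le_shift hp hq hs m)
  rw [le_div_iff₀ (by positivity), mul_comm, Nat.cast_succ, mul_binomialSum_one_div_succ hpq hs m]
  linarith [mul_nonneg (by positivity : 0 ≤ (m + 1) * p * s * q) this]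

theorem binomialSum_one_div_lt (hp : 0 < p) (hq : 0 < q) (hpq : p + q = 1) (hs : 0 < s)
    {r : ℕ} (hr : 2 ≤ r) :
    binomialSum p q r (fun i => 1 / (1 + i * s)) < (1 + q * s) / (1 + q * s + r * (p * s)) := by
  obtain ⟨m, rfl⟩ : ∃ m, r = m + 1 := ⟨r - 1, by omega⟩
  have := sub_pos.2 (binomialSum_one_div_lt_shift hp hq.le hs (by omega : 1 ≤ m))
  rw [lt_div_iff₀ (by positivity), mul_comm, Nat.cast_succ,
    mul_binomialSum_one_div_succ hpq hs.le m]
  linarith [mul_pos (by positivity : 0 < (m + 1) * p * s * q) this]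

end

/-- With `γ = 1`,
`P_r^{drop} = Σ_{i=0}^r C(r,i)(ω/(β+ω))^{r-i}(β/(β+ω))^i/(1+i(β+ω))` and
`P_r^{mod} = (1+ω)/(1+ω+rβ)` satisfy `P_r^{drop} ≤ P_r^{mod}` for all `r`,
with equality for `r = 0, 1` and strict inequality for `r ≥ 2` when `ω > 0`. -/
theorem stmt_10 (β ω : ℝ) (hβ : 0 < β) (hω : 0 ≤ ω)
    (Pdrop Pmod : ℕ → ℝ)
    (hd : ∀ r : ℕ, Pdrop r = ∑ i ∈ Finset.range (r + 1),
      (r.choose i : ℝ) * (ω / (β + ω)) ^ (r - i) * (β / (β + ω)) ^ i *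
        (1 / (1 + (i : ℝ) * (β + ω))))
    (hm : ∀ r : ℕ, Pmod r = (1 + ω) / (1 + ω + (r : ℝ) * β)) :
    (∀ r : ℕ, Pdrop r ≤ Pmod r) ∧
    Pdrop 0 = Pmod 0 ∧ Pdrop 1 = Pmod 1 ∧
    (0 < ω → ∀ r : ℕ, 2 ≤ r → Pdrop r < Pmod r) := by
  have hs : 0 < β + ω := by linarith
  set s := β + ω
  have hp : 0 < β / s := div_pos hβ hs
  have hq : 0 ≤ ω / s := div_nonneg hω hs.le
  have hpq : β / s + ω / s = 1 := by rw [← add_div, div_self hs.ne']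
  have hmod : ∀ r : ℕ, Pmod r = (1 + ω / s * s) / (1 + ω / s * s + r * (β / s * s)) := by
    intro r
    rw [hm, div_mul_cancel₀ _ hs.ne', div_mul_cancel₀ _ hs.ne']
  refine ⟨fun r => ?_, ?_, ?_, fun hω' r hr => ?_⟩ <;> rw [hd, hmod]
  · exact binomialSum_one_div_le hp.le hq hpq hs.le r
  · exact binomialSum_one_div_zero hq hs.le
  · exact binomialSum_one_div_one hpq hs.le
  · exact binomialSum_one_div_lt hp (div_pos hω' hs) hpq hs hr
end

section
/- Let β > 0, ω ≥ 0. For an integer r ≥ 2, define H̃(r) = Σ_{i=0}^{r−2} C(r−1,i) ω^{r−1−i} β^{i+1} (r−1−i)/(1+(i+1)(β+ω)) − Σ_{i=1}^{r−1} C(r−1,i) ω^{r−1−i} β^{i} · iω/(1+(i+1)(β+ω)). Then H̃(r) = (r−1) Σ_{i=0}^{r−2} C(r−2,i) ω^{r−1−i} β^{i+1} [1/(1+(i+1)(β+ω)) − 1/(1+(i+2)(β+ω))], and in particular H̃(r) ≥ 0, with H̃(r) > 0 if ω > 0 and β > 0. -/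
/-- The key combinatorial identity and positivity for `H̃(r)`,
`r ≥ 2`, in the comparison of the dropping model with the increased-recovery
model (Appendix F, with `γ = 1`). -/
theorem stmt_11 (β ω : ℝ) (hβ : 0 < β) (hω : 0 ≤ ω) (r : ℕ) (hr : 2 ≤ r)
    (Ht : ℝ)
    (hHt : Ht =
      (∑ i ∈ Finset.range (r - 1),
        ((r - 1).choose i : ℝ) * ω ^ (r - 1 - i) * β ^ (i + 1) *
          ((r : ℝ) - 1 - (i : ℝ)) / (1 + ((i : ℝ) + 1) * (β + ω)))
      - ∑ i ∈ Finset.Icc 1 (r - 1),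
        ((r - 1).choose i : ℝ) * ω ^ (r - 1 - i) * β ^ i *
          ((i : ℝ) * ω) / (1 + ((i : ℝ) + 1) * (β + ω))) :
    Ht = ((r : ℝ) - 1) * ∑ i ∈ Finset.range (r - 1),
        ((r - 2).choose i : ℝ) * ω ^ (r - 1 - i) * β ^ (i + 1) *
          (1 / (1 + ((i : ℝ) + 1) * (β + ω)) - 1 / (1 + ((i : ℝ) + 2) * (β + ω))) ∧
    0 ≤ Ht ∧ (0 < ω → 0 < Ht) := by
  obtain ⟨m, rfl⟩ : ∃ m, r = m + 2 := ⟨r - 2, by omega⟩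
  clear hr
  have hs : 0 < β + ω := by linarith
  have hd : ∀ i : ℕ, (0:ℝ) < 1 + ((i:ℝ) + 1) * (β + ω) := by
    intro i
    have : (0:ℝ) ≤ (i:ℝ) := Nat.cast_nonneg i
    nlinarith
  -- First sum rewrite
  have hA : (∑ i ∈ Finset.range (m + 2 - 1),
        ((m + 2 - 1).choose i : ℝ) * ω ^ (m + 2 - 1 - i) * β ^ (i + 1) *
          (((m + 2 : ℕ) : ℝ) - 1 - (i : ℝ)) / (1 + ((i : ℝ) + 1) * (β + ω)))
      = ∑ i ∈ Finset.range (m + 1),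
          ((m:ℝ) + 1) * (m.choose i : ℝ) * ω ^ (m + 1 - i) * β ^ (i + 1) *
            (1 / (1 + ((i : ℝ) + 1) * (β + ω))) := by
    apply Finset.sum_congr rfl
    intro i hi
    have hi' : i ≤ m := by simpa [Nat.lt_succ_iff] using hi
    have key : ((m+1).choose i : ℝ) * ((m + 1 - i : ℕ) : ℝ) = ((m:ℝ)+1) * (m.choose i : ℝ) := by
      have := congrArg (Nat.cast : ℕ → ℝ) (Nat.choose_mul_succ_eq m i)
      push_cast at this
      linarith
    have hcast : ((m + 2 : ℕ) : ℝ) - 1 - (i:ℝ) = ((m + 1 - i : ℕ) : ℝ) := by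
      rw [Nat.cast_sub (by omega : i ≤ m + 1)]
      push_cast; ring
    rw [hcast, div_eq_mul_one_div]
    show ((m+1).choose i : ℝ) * ω ^ (m + 1 - i) * β ^ (i + 1) * ((m + 1 - i : ℕ) : ℝ) *
        (1 / (1 + ((i : ℝ) + 1) * (β + ω))) = _
    calc ((m+1).choose i : ℝ) * ω ^ (m + 1 - i) * β ^ (i + 1) * ((m + 1 - i : ℕ) : ℝ) *
        (1 / (1 + ((i : ℝ) + 1) * (β + ω)))
        = (((m+1).choose i : ℝ) * ((m + 1 - i : ℕ) : ℝ)) * ω ^ (m + 1 - i) * β ^ (i + 1) *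
          (1 / (1 + ((i : ℝ) + 1) * (β + ω))) := by ring
      _ = _ := by rw [key]
  -- Second sum rewrite
  have hB : (∑ i ∈ Finset.Icc 1 (m + 2 - 1),
        ((m + 2 - 1).choose i : ℝ) * ω ^ (m + 2 - 1 - i) * β ^ i *
          ((i : ℝ) * ω) / (1 + ((i : ℝ) + 1) * (β + ω)))
      = ∑ i ∈ Finset.range (m + 1),
          ((m:ℝ) + 1) * (m.choose i : ℝ) * ω ^ (m + 1 - i) * β ^ (i + 1) *
            (1 / (1 + ((i : ℝ) + 2) * (β + ω))) := by
    have h0 : (Finset.Icc 1 (m+1)) = Finset.range (m+2) \ {0} := by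
      ext x; simp [Finset.mem_Icc, Finset.mem_range]; omega
    rw [show m + 2 - 1 = m + 1 from rfl, h0, Finset.sum_sdiff_eq_sub (by simp)]
    simp only [Finset.sum_singleton, Nat.cast_zero, zero_mul, mul_zero, zero_div, sub_zero]
    rw [Finset.sum_range_succ' (fun i => ((m+1).choose i : ℝ) * ω ^ (m + 1 - i) * β ^ i *
          ((i : ℝ) * ω) / (1 + ((i : ℝ) + 1) * (β + ω)))]
    simp only [Nat.cast_zero, zero_mul, mul_zero, zero_div, add_zero]
    apply Finset.sum_congr rfl
    intro i hi
    have hi' : i ≤ m := by simpa [Nat.lt_succ_iff] using hi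
    have key : ((m+1).choose (i+1) : ℝ) * ((i:ℝ)+1) = ((m:ℝ)+1) * (m.choose i : ℝ) := by
      have := congrArg (Nat.cast : ℕ → ℝ) (Nat.add_one_mul_choose_eq m i)
      push_cast at this
      linarith
    have hω' : ω ^ (m - i) * ω = ω ^ (m + 1 - i) := by
      rw [← pow_succ, show m - i + 1 = m + 1 - i by omega]
    push_cast
    rw [show (i:ℝ) + 1 + 1 = (i:ℝ) + 2 by ring, div_eq_mul_one_div]
    calc ((m+1).choose (i+1) : ℝ) * ω ^ (m - i) * β ^ (i+1) * (((i:ℝ)+1) * ω) *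
        (1 / (1 + ((i : ℝ) + 2) * (β + ω)))
        = (((m+1).choose (i+1) : ℝ) * ((i:ℝ)+1)) * (ω ^ (m - i) * ω) * β ^ (i+1) *
          (1 / (1 + ((i : ℝ) + 2) * (β + ω))) := by ring
      _ = _ := by rw [key, hω']
  rw [hA, hB, ← Finset.sum_sub_distrib] at hHt
  have hterm : ∀ i ∈ Finset.range (m + 1),
      ((m:ℝ) + 1) * (m.choose i : ℝ) * ω ^ (m + 1 - i) * β ^ (i + 1) *
          (1 / (1 + ((i : ℝ) + 1) * (β + ω)))
        - ((m:ℝ) + 1) * (m.choose i : ℝ) * ω ^ (m + 1 - i) * β ^ (i + 1) *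
          (1 / (1 + ((i : ℝ) + 2) * (β + ω)))
      = ((m:ℝ) + 1) * (((m.choose i : ℝ)) * ω ^ (m + 1 - i) * β ^ (i + 1) *
          (1 / (1 + ((i : ℝ) + 1) * (β + ω)) - 1 / (1 + ((i : ℝ) + 2) * (β + ω)))) := by
    intro i _; ring
  rw [Finset.sum_congr rfl hterm, ← Finset.mul_sum] at hHt
  have hbr : ∀ i : ℕ, 0 ≤ 1 / (1 + ((i : ℝ) + 1) * (β + ω)) - 1 / (1 + ((i : ℝ) + 2) * (β + ω)) := by
    intro i
    have h1 := hd i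
    have h2 : (0:ℝ) < 1 + ((i:ℝ) + 2) * (β + ω) := by nlinarith [Nat.cast_nonneg (α := ℝ) i]
    have := one_div_le_one_div_of_le h1 (by nlinarith : 1 + ((i:ℝ) + 1) * (β + ω) ≤ 1 + ((i:ℝ) + 2) * (β + ω))
    linarith
  have hbrpos : ∀ i : ℕ, 0 < 1 / (1 + ((i : ℝ) + 1) * (β + ω)) - 1 / (1 + ((i : ℝ) + 2) * (β + ω)) := by
    intro i
    have h1 := hd i
    have h2 : (0:ℝ) < 1 + ((i:ℝ) + 2) * (β + ω) := by nlinarith [Nat.cast_nonneg (α := ℝ) i]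
    have := one_div_lt_one_div_of_lt h1 (by nlinarith : 1 + ((i:ℝ) + 1) * (β + ω) < 1 + ((i:ℝ) + 2) * (β + ω))
    linarith
  refine ⟨?_, ?_, ?_⟩
  · rw [hHt]
    push_cast
    rw [show ((m:ℝ) + 2 - 1) = (m:ℝ) + 1 by ring]
  · rw [hHt]
    apply mul_nonneg (by positivity)
    apply Finset.sum_nonneg
    intro i _
    have := hbr i
    positivity
  · intro hω0
    rw [hHt]
    apply mul_pos (by positivity)
    apply Finset.sum_pos
    · intro i hi
      have hi' : i ≤ m := by simpa [Nat.lt_succ_iff] using hi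
      have hc : 0 < (m.choose i : ℝ) := by
        exact_mod_cast Nat.choose_pos hi'
      have := hbrpos i
      positivity
    · exact ⟨0, Finset.mem_range.mpr (by omega)⟩
end

section
/- Let f, f̃, g, g̃ : [0,1] → [0,1] be continuous increasing functions with f̃(1) = g̃(1) = 1, f̃ and g̃ convex and differentiable at 1 with f̃'(1) = g̃'(1) = R₀ > 1. Suppose f(s) < g(s) and f̃(s) < g̃(s) for all s ∈ [0,1), and g is strictly increasing on [0,1]. Let σ_f be the smallest fixed point of f̃ in [0,1) and σ_g the smallest fixed point of g̃ in [0,1) (both exist since R₀ > 1). Then σ_f < σ_g and 1 − f(σ_f) > 1 − g(σ_g). -/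
/-- Abstract comparison of branching-process extinction
probabilities: if the offspring PGFs of one process are strictly below those of
another on `[0,1)` (with common mean `R₀ > 1` at `1`), then its smallest fixed
point is strictly smaller and its survival (major outbreak) probability is
strictly greater. -/
theorem stmt_13 (f ft g gt : ℝ → ℝ) (R₀ : ℝ) (hR : 1 < R₀)
    (hfc : ContinuousOn f (Set.Icc 0 1)) (hgc : ContinuousOn g (Set.Icc 0 1))
    (hftc : ContinuousOn ft (Set.Icc 0 1)) (hgtc : ContinuousOn gt (Set.Icc 0 1))
    (hfm : MonotoneOn f (Set.Icc 0 1)) (hftm : MonotoneOn ft (Set.Icc 0 1))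
    (hgtm : MonotoneOn gt (Set.Icc 0 1))
    (hgm : StrictMonoOn g (Set.Icc 0 1))
    (hfmap : Set.MapsTo f (Set.Icc 0 1) (Set.Icc 0 1))
    (hgmap : Set.MapsTo g (Set.Icc 0 1) (Set.Icc 0 1))
    (hftmap : Set.MapsTo ft (Set.Icc 0 1) (Set.Icc 0 1))
    (hgtmap : Set.MapsTo gt (Set.Icc 0 1) (Set.Icc 0 1))
    (hft1 : ft 1 = 1) (hgt1 : gt 1 = 1)
    (hftconv : ConvexOn ℝ (Set.Icc 0 1) ft) (hgtconv : ConvexOn ℝ (Set.Icc 0 1) gt)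
    (hftd : HasDerivWithinAt ft R₀ (Set.Iic 1) 1)
    (hgtd : HasDerivWithinAt gt R₀ (Set.Iic 1) 1)
    (hfg : ∀ s ∈ Set.Ico (0 : ℝ) 1, f s < g s)
    (hftgt : ∀ s ∈ Set.Ico (0 : ℝ) 1, ft s < gt s)
    (σf σg : ℝ) (hσf : σf ∈ Set.Ico (0 : ℝ) 1) (hσg : σg ∈ Set.Ico (0 : ℝ) 1)
    (hσffix : ft σf = σf) (hσgfix : gt σg = σg)
    (hσfmin : ∀ s ∈ Set.Ico (0 : ℝ) 1, ft s = s → σf ≤ s)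
    (hσgmin : ∀ s ∈ Set.Ico (0 : ℝ) 1, gt s = s → σg ≤ s) :
    σf < σg ∧ 1 - g σg < 1 - f σf := by
  have hftσg : ft σg < σg := by
    have := hftgt σg hσg
    rwa [hσgfix] at this
  have hσg01 : σg ∈ Set.Icc (0:ℝ) 1 := ⟨hσg.1, le_of_lt hσg.2⟩
  have hsub : Set.Icc (0:ℝ) σg ⊆ Set.Icc 0 1 :=
    Set.Icc_subset_Icc le_rfl (le_of_lt hσg.2)
  have hcont : ContinuousOn (fun s => ft s - s) (Set.Icc 0 σg) :=
    (hftc.mono hsub).sub continuousOn_id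
  have h0 : (0:ℝ) ≤ ft 0 - 0 := by
    have := (hftmap (Set.left_mem_Icc.2 zero_le_one)).1
    linarith
  have hlt : σf < σg := by
    have key : (0:ℝ) ∈ Set.Icc (ft σg - σg) (ft 0 - 0) := ⟨by linarith, h0⟩
    obtain ⟨x, hx, hxfix⟩ := intermediate_value_Icc' hσg.1 hcont key
    have hxfix' : ft x = x := by
      have : ft x - x = 0 := hxfix
      linarith
    have hxne : x ≠ σg := fun h => absurd (h ▸ hxfix') (ne_of_lt hftσg)
    have hxlt : x < σg := lt_of_le_of_ne hx.2 hxne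
    exact lt_of_le_of_lt (hσfmin x ⟨hx.1, lt_trans hxlt hσg.2⟩ hxfix') hxlt
  refine ⟨hlt, ?_⟩
  have h1 : f σf < g σf := hfg σf hσf
  have h2 : g σf ≤ g σg :=
    le_of_lt (hgm ⟨hσf.1, le_of_lt hσf.2⟩ hσg01 hlt)
  linarith
end

section
/- Let β > 0, ω ≥ 0, γ ≥ 0 with p_ω = ω/(β+ω), and let f_D be the PGF of a degree distribution with mean μ_D ∈ (0,∞). Suppose θ : [0,∞) → [0,1] satisfies the ODE dθ/dt = β f_D'(θ)/μ_D − (β+γ+ω)θ + γ + ω with θ(0) = 1. Suppose ξ : [0,∞) → [0,∞) satisfies ξ(0)=0 and dξ/dt = 1 + (γ/(β+ω))(1 − e^{(β+ω)ξ}) − e^{(β+ω)ξ} f_D'(ψ(ξ))/μ_D, where ψ(u) = p_ω + (1−p_ω) e^{-(β+ω)u}. Then θ(t) = ψ(ξ(t)) for all t ≥ 0 (assuming uniqueness of solutions to the θ-ODE). -/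
open Real

/-!
Writing `c = β + ω`, the map `ψ` relaxes exponentially to `p_ω`, i.e. `ψ' = -c (ψ - p_ω)` with
`ψ - p_ω = (β / c) e^{-c u}`. By the chain rule, `(ψ ∘ ξ)' = -β e^{-c ξ} ξ'`, and the factor
`e^{-c ξ}` cancels every `e^{c ξ}` in the `ξ`-equation, leaving exactly the `θ`-vector field
evaluated at `ψ ∘ ξ`. Since `ψ (ξ 0) = ψ 0 = 1`, uniqueness for the `θ`-equation gives `θ = ψ ∘ ξ`.
-/

theorem hasDerivAt_const_add_mul_exp {ψ : ℝ → ℝ} {q c : ℝ}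
    (hψ : ∀ u, ψ u = q + (1 - q) * exp (-c * u)) (u : ℝ) :
    HasDerivAt ψ (-c * (ψ u - q)) u := by
  rw [funext hψ]
  have h := ((((hasDerivAt_id u).const_mul (-c)).exp).const_mul (1 - q)).const_add q
  refine h.congr_deriv ?_
  simp only [id, mul_one]
  ring

theorem hasDerivAt_comp_timeChange {β ω γ m pω : ℝ} (hβω : β + ω ≠ 0)
    (hpω : pω = ω / (β + ω)) {ψ : ℝ → ℝ} (hψ : ∀ u, ψ u = pω + (1 - pω) * exp (-(β + ω) * u))
    (g : ℝ → ℝ) {ξ : ℝ → ℝ} {t : ℝ}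
    (hξ : HasDerivAt ξ (1 + γ / (β + ω) * (1 - exp ((β + ω) * ξ t))
      - exp ((β + ω) * ξ t) * g (ψ (ξ t)) / m) t) :
    HasDerivAt (ψ ∘ ξ) (β * g (ψ (ξ t)) / m - (β + γ + ω) * ψ (ξ t) + γ + ω) t := by
  refine ((hasDerivAt_const_add_mul_exp hψ (ξ t)).comp t hξ).congr_deriv ?_
  generalize g (ψ (ξ t)) = y  -- keeps `rw [hψ]` out of the argument of `g`
  rw [hψ, hpω, neg_mul (β + ω) (ξ t), exp_neg]
  field_simp
  ring

theorem stmt_16_general (β ω γ : ℝ) (hβ : 0 < β) (hω : 0 ≤ ω)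
    (pω : ℝ) (hpω : pω = ω / (β + ω))
    (fD : ℝ → ℝ)
    (μD : ℝ)
    (ψ : ℝ → ℝ) (hψ : ∀ u, ψ u = pω + (1 - pω) * exp (-(β + ω) * u))
    (θ : ℝ → ℝ) (hθ0 : θ 0 = 1)
    (hθode : ∀ t, 0 ≤ t →
      HasDerivAt θ (β * deriv fD (θ t) / μD - (β + γ + ω) * θ t + γ + ω) t)
    (ξ : ℝ → ℝ) (hξ0 : ξ 0 = 0)
    (hξode : ∀ t, 0 ≤ t →
      HasDerivAt ξ (1 + γ / (β + ω) * (1 - exp ((β + ω) * ξ t))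
        - exp ((β + ω) * ξ t) * deriv fD (ψ (ξ t)) / μD) t)
    (huniq : ∀ θ₁ θ₂ : ℝ → ℝ, θ₁ 0 = 1 → θ₂ 0 = 1 →
      (∀ t, 0 ≤ t →
        HasDerivAt θ₁ (β * deriv fD (θ₁ t) / μD - (β + γ + ω) * θ₁ t + γ + ω) t) →
      (∀ t, 0 ≤ t →
        HasDerivAt θ₂ (β * deriv fD (θ₂ t) / μD - (β + γ + ω) * θ₂ t + γ + ω) t) →
      ∀ t, 0 ≤ t → θ₁ t = θ₂ t) :
    ∀ t, 0 ≤ t → θ t = ψ (ξ t) := by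
  have hβω : β + ω ≠ 0 := by positivity
  refine huniq θ (ψ ∘ ξ) hθ0 ?_ hθode fun t ht ↦ ?_
  · simp [hξ0, hψ]
  · exact hasDerivAt_comp_timeChange hβω hpω hψ _ (hξode t ht)

/-- If `θ` solves the edge-based-compartmental ODE
`θ' = β f_D'(θ)/μ_D − (β+γ+ω)θ + γ + ω`, `θ(0) = 1`, and `ξ` solves the
time-transformation ODE `ξ' = 1 + (γ/(β+ω))(1 − e^{(β+ω)ξ}) − e^{(β+ω)ξ} f_D'(ψ(ξ))/μ_D`,
`ξ(0) = 0`, with `ψ(u) = p_ω + (1−p_ω)e^{-(β+ω)u}`, then (assuming uniqueness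
of solutions of the `θ`-ODE) `θ(t) = ψ(ξ(t))` for all `t ≥ 0`. -/
theorem stmt_16 (β ω γ : ℝ) (hβ : 0 < β) (hω : 0 ≤ ω) (hγ : 0 ≤ γ)
    (pω : ℝ) (hpω : pω = ω / (β + ω))
    (p : ℕ → ℝ) (hp : ∀ k, 0 ≤ p k) (hp1 : ∑' k : ℕ, p k = 1)
    (fD : ℝ → ℝ) (hfD : ∀ s, fD s = ∑' k : ℕ, p k * s ^ k)
    (μD : ℝ) (hμD : μD = ∑' k : ℕ, (k : ℝ) * p k) (hμpos : 0 < μD)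
    (ψ : ℝ → ℝ) (hψ : ∀ u, ψ u = pω + (1 - pω) * exp (-(β + ω) * u))
    (θ : ℝ → ℝ) (hθ0 : θ 0 = 1)
    (hθmem : ∀ t, 0 ≤ t → θ t ∈ Set.Icc (0 : ℝ) 1)
    (hθode : ∀ t, 0 ≤ t →
      HasDerivAt θ (β * deriv fD (θ t) / μD - (β + γ + ω) * θ t + γ + ω) t)
    (ξ : ℝ → ℝ) (hξ0 : ξ 0 = 0) (hξnn : ∀ t, 0 ≤ t → 0 ≤ ξ t)
    (hξode : ∀ t, 0 ≤ t →
      HasDerivAt ξ (1 + γ / (β + ω) * (1 - exp ((β + ω) * ξ t))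
        - exp ((β + ω) * ξ t) * deriv fD (ψ (ξ t)) / μD) t)
    (huniq : ∀ θ₁ θ₂ : ℝ → ℝ, θ₁ 0 = 1 → θ₂ 0 = 1 →
      (∀ t, 0 ≤ t →
        HasDerivAt θ₁ (β * deriv fD (θ₁ t) / μD - (β + γ + ω) * θ₁ t + γ + ω) t) →
      (∀ t, 0 ≤ t →
        HasDerivAt θ₂ (β * deriv fD (θ₂ t) / μD - (β + γ + ω) * θ₂ t + γ + ω) t) →
      ∀ t, 0 ≤ t → θ₁ t = θ₂ t) :
    ∀ t, 0 ≤ t → θ t = ψ (ξ t) :=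
  stmt_16_general β ω γ hβ hω pω hpω fD μD ψ hψ θ hθ0 hθode ξ hξ0 hξode huniq
end

section
/- With the setup of the previous statement (A continuous on [0,1], A' increasing on [0,1], A(1) = −y_E(0) < 0), let δ ∈ [0, y_E(0)) and suppose z_δ ∈ (0,1) satisfies A(z_δ) = −δ/z_δ. Then A'(z_δ) < δ/z_δ². -/
open Set

theorem monotoneOn_Icc_of_monotoneOn_deriv_of_nonneg_left {f f' : ℝ → ℝ} {a b : ℝ}
    (hf : ∀ x ∈ Icc a b, HasDerivAt f (f' x) x) (hf' : MonotoneOn f' (Icc a b))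
    (ha : 0 ≤ f' a) : MonotoneOn f (Icc a b) := by
  refine monotoneOn_of_hasDerivWithinAt_nonneg (convex_Icc a b)
    (fun x hx => (hf x hx).continuousAt.continuousWithinAt)
    (fun x hx => (hf x (interior_subset hx)).hasDerivWithinAt) fun x hx => ?_
  rw [interior_Icc] at hx
  exact ha.trans (hf' ⟨le_rfl, hx.1.le.trans hx.2.le⟩ (Ioo_subset_Icc_self hx) hx.1.le)

theorem hasDerivAt_add_const_div {A : ℝ → ℝ} {a x : ℝ} (c : ℝ) (hA : HasDerivAt A a x)
    (hx : x ≠ 0) : HasDerivAt (fun z => A z + c / z) (a - c / x ^ 2) x := by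
  have hinv : HasDerivAt (fun z => c / z) (-(c / x ^ 2)) x := by
    simpa [div_eq_mul_inv, mul_comm] using (hasDerivAt_inv hx).const_mul c
  rw [sub_eq_add_neg]
  exact hA.add hinv

theorem MonotoneOn.sub_const_div_sq {g : ℝ → ℝ} {s : Set ℝ} (hg : MonotoneOn g s) {c : ℝ}
    (hc : 0 ≤ c) (hs : s ⊆ Ioi 0) : MonotoneOn (fun x => g x - c / x ^ 2) s := by
  intro x hx y hy hxy
  have hx0 : 0 < x := hs hx
  have : c / y ^ 2 ≤ c / x ^ 2 := div_le_div_of_nonneg_left hc (by positivity) (by gcongr)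
  linarith [hg hx hy hxy]

theorem stmt_18_general (yE0 : ℝ)
    (A A' : ℝ → ℝ)
    (hderiv : ∀ z ∈ Set.Icc (0 : ℝ) 1, HasDerivAt A (A' z) z)
    (hA'mono : MonotoneOn A' (Set.Icc 0 1))
    (hA1 : A 1 = -yE0)
    (δ : ℝ) (hδ : δ ∈ Set.Ico 0 yE0)
    (zδ : ℝ) (hzδ : zδ ∈ Set.Ioo (0 : ℝ) 1) (hAz : A zδ = -δ / zδ) :
    A' zδ < δ / zδ ^ 2 := by
  obtain ⟨hz0, hz1⟩ := hzδ
  by_contra! hcon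
  have hsub : Icc zδ 1 ⊆ Icc 0 1 := Icc_subset_Icc_left hz0.le
  -- `z ↦ A z + δ / z` vanishes at `zδ` and would be nondecreasing on `[zδ, 1]`, yet is negative at 1.
  have hmono : MonotoneOn (fun z => A z + δ / z) (Icc zδ 1) :=
    monotoneOn_Icc_of_monotoneOn_deriv_of_nonneg_left
      (fun x hx => hasDerivAt_add_const_div δ (hderiv x (hsub hx)) (hz0.trans_le hx.1).ne')
      ((hA'mono.mono hsub).sub_const_div_sq hδ.1 fun x hx => hz0.trans_le hx.1)
      (sub_nonneg.mpr hcon)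
  have hle := hmono (left_mem_Icc.mpr hz1.le) (right_mem_Icc.mpr hz1.le) hz1.le
  simp only [hAz, hA1, neg_div, neg_add_cancel, div_one] at hle
  linarith [hδ.2]

/-- If `A` is differentiable with increasing derivative `A'` on
`[0,1]`, `A(1) = −y_E(0) < 0`, `δ ∈ [0, y_E(0))` and `z_δ ∈ (0,1)` satisfies
`A(z_δ) = −δ/z_δ`, then `A'(z_δ) < δ/z_δ²` (the transversality condition). -/
theorem stmt_18 (yE0 : ℝ) (hy : 0 < yE0)
    (A A' : ℝ → ℝ) (hcont : ContinuousOn A (Set.Icc 0 1))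
    (hderiv : ∀ z ∈ Set.Icc (0 : ℝ) 1, HasDerivAt A (A' z) z)
    (hA'mono : MonotoneOn A' (Set.Icc 0 1))
    (hA1 : A 1 = -yE0)
    (δ : ℝ) (hδ : δ ∈ Set.Ico 0 yE0)
    (zδ : ℝ) (hzδ : zδ ∈ Set.Ioo (0 : ℝ) 1) (hAz : A zδ = -δ / zδ) :
    A' zδ < δ / zδ ^ 2 :=
  stmt_18_general yE0 A A' hderiv hA'mono hA1 δ hδ zδ hzδ hAz
end
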